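/- Let μ be a Radon measure on [a, ∞), and let g : [a, ∞) → (0, ∞) be a convex function whose right derivative satisfies g'₊(x) = g'₊(a) + ∫_{(a, x]} g(y) dμ(y) for all x ≥ a. Define s_g(x) = ∫_a^x g(z)^{−2} dz. Then the product s_g·g has right derivative (s_g g)'₊(x) = 1/g(a) + ∫_{(a, x]} s_g(y) g(y) dμ(y) for all x ≥ a, and consequently s_g(x)g(x) = (x − a)/g(a) + ∫_{(a, x]} (x − y)·s_g(y)·g(y) dμ(y). -/

import Mathlib

/-!
Write `s = s_g` and `G(x) = ∫_{(a,x]} g dμ`. Since `s' = g⁻²` and `g'₊ = κ + G`, the first claim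
amounts to `g(x)⁻¹ + κ s(x) + ∫_{(a,x]} (s(x) - s(y)) g(y) dμ(y) = g(a)⁻¹`. The left side is
continuous with vanishing right derivative, because for monotone `φ` the right derivative of
`t ↦ ∫_{(a,t]} (φ(t) - φ(y)) ρ(y) dμ(y)` is `φ'(t) ∫_{(a,t]} ρ dμ`: the contribution of the new
piece `(t, t + h]` is `O(h · μ (t, t + h]) = o(h)`. The same rule with `φ = id` shows that both
sides of the second claim have the right derivative `g(a)⁻¹ + ∫_{(a,x]} s g dμ`; they are
continuous and vanish at `a`, hence agree.
-/

open MeasureTheory Set Filter Topology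

lemma tendsto_measureReal_Ioc_nhdsGT (μ : Measure ℝ) [IsLocallyFiniteMeasure μ] (x : ℝ) :
    Tendsto (fun t => μ.real (Ioc x t)) (𝓝[>] x) (𝓝 0) := by
  have hempty : ⋂ r > x, Ioc x r = ∅ := by
    refine eq_empty_of_forall_notMem fun y hy => ?_
    have hxy : x < y := (mem_iInter₂.1 hy (x + 1) (by linarith)).1
    have := (mem_iInter₂.1 hy ((x + y) / 2) (by linarith)).2
    linarith
  have h := tendsto_measure_biInter_gt (μ := μ) (s := Ioc x) (fun r _ => nullMeasurableSet_Ioc)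
    (fun _ _ _ hij => Ioc_subset_Ioc_right hij) ⟨x + 1, by linarith, measure_Ioc_lt_top.ne⟩
  rw [hempty, measure_empty] at h
  exact (ENNReal.tendsto_toReal ENNReal.zero_ne_top).comp h

lemma ContinuousOn.integrableOn_Ioc_of_Ici {μ : Measure ℝ} [IsLocallyFiniteMeasure μ]
    {f : ℝ → ℝ} {a : ℝ} (hf : ContinuousOn f (Ici a)) (b : ℝ) : IntegrableOn f (Ioc a b) μ :=
  (hf.mono Icc_subset_Ici_self).integrableOn_Icc.mono_set Ioc_subset_Icc_self

lemma ContinuousOn.exists_norm_le_Icc_of_Ici {f : ℝ → ℝ} {a : ℝ} (hf : ContinuousOn f (Ici a))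
    (b : ℝ) : ∃ K, ∀ y ∈ Icc a b, ‖f y‖ ≤ K :=
  isCompact_Icc.exists_bound_of_continuousOn (hf.mono Icc_subset_Ici_self)

/-- For `φ = id` this is the second primitive `t ↦ ∫_a^t ∫_{(a,z]} ρ dμ dz` of the measure `ρ μ`. -/
noncomputable def incrementIntegral (μ : Measure ℝ) (a : ℝ) (φ ρ : ℝ → ℝ) (t : ℝ) : ℝ :=
  ∫ y in Ioc a t, (φ t - φ y) * ρ y ∂μ

namespace incrementIntegral

variable {μ : Measure ℝ} {a : ℝ} {φ ρ : ℝ → ℝ}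

@[simp]
lemma self : incrementIntegral μ a φ ρ a = 0 := by
  simp [incrementIntegral]

lemma integrableOn_sub_mul (c : ℝ) {s : Set ℝ} (hρ : IntegrableOn ρ s μ)
    (hφρ : IntegrableOn (fun y => φ y * ρ y) s μ) :
    IntegrableOn (fun y => (φ c - φ y) * ρ y) s μ := by
  simp_rw [sub_mul]
  exact (hρ.const_mul (φ c)).sub hφρ

lemma eq_sub {t : ℝ} (hρ : IntegrableOn ρ (Ioc a t) μ)
    (hφρ : IntegrableOn (fun y => φ y * ρ y) (Ioc a t) μ) :
    incrementIntegral μ a φ ρ t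
      = φ t * ∫ y in Ioc a t, ρ y ∂μ - ∫ y in Ioc a t, φ y * ρ y ∂μ := by
  rw [← MeasureTheory.integral_const_mul, ← integral_sub (hρ.const_mul _) hφρ]
  simp only [incrementIntegral, sub_mul]

lemma sub_eq {u v : ℝ} (hau : a ≤ u) (huv : u ≤ v) (hρ : IntegrableOn ρ (Ioc a v) μ)
    (hφρ : IntegrableOn (fun y => φ y * ρ y) (Ioc a v) μ) :
    incrementIntegral μ a φ ρ v - incrementIntegral μ a φ ρ u
      = (φ v - φ u) * (∫ y in Ioc a u, ρ y ∂μ)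
        + ∫ y in Ioc u v, (φ v - φ y) * ρ y ∂μ := by
  have hint := integrableOn_sub_mul v hρ hφρ
  have hsub : Ioc a u ⊆ Ioc a v := Ioc_subset_Ioc_right huv
  have hsplit : incrementIntegral μ a φ ρ v
      = (∫ y in Ioc a u, (φ v - φ y) * ρ y ∂μ) + ∫ y in Ioc u v, (φ v - φ y) * ρ y ∂μ := by
    rw [incrementIntegral, ← setIntegral_union (Ioc_disjoint_Ioc_of_le le_rfl) measurableSet_Ioc
      (hint.mono_set hsub) (hint.mono_set (Ioc_subset_Ioc_left hau)),
      Ioc_union_Ioc_eq_Ioc hau huv]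
  have hdiff : (∫ y in Ioc a u, (φ v - φ y) * ρ y ∂μ) - incrementIntegral μ a φ ρ u
      = (φ v - φ u) * ∫ y in Ioc a u, ρ y ∂μ := by
    rw [incrementIntegral, ← MeasureTheory.integral_const_mul, ← integral_sub (hint.mono_set hsub)
      ((integrableOn_sub_mul u hρ hφρ).mono_set hsub)]
    congr 1 with y
    ring
  linear_combination hsplit + hdiff

lemma norm_setIntegral_Ioc_le {u v K : ℝ} (huv : u ≤ v) (hφ : MonotoneOn φ (Icc u v))
    (hK : ∀ y ∈ Ioc u v, ‖ρ y‖ ≤ K) (hfin : μ (Ioc u v) < ⊤) :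
    ‖∫ y in Ioc u v, (φ v - φ y) * ρ y ∂μ‖ ≤ (φ v - φ u) * K * μ.real (Ioc u v) := by
  refine norm_setIntegral_le_of_norm_le_const hfin fun y hy => ?_
  have hyv : φ y ≤ φ v := hφ (Ioc_subset_Icc_self hy) (right_mem_Icc.2 huv) hy.2
  have huy : φ u ≤ φ y := hφ (left_mem_Icc.2 huv) (Ioc_subset_Icc_self hy) hy.1.le
  rw [norm_mul, Real.norm_of_nonneg (sub_nonneg.2 hyv)]
  exact mul_le_mul (by linarith) (hK y hy) (norm_nonneg _) (by linarith)

lemma norm_sub_le [IsLocallyFiniteMeasure μ] {u v K : ℝ} (hau : a ≤ u) (huv : u ≤ v)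
    (hφ : MonotoneOn φ (Icc u v)) (hK : ∀ y ∈ Ioc a v, ‖ρ y‖ ≤ K)
    (hρ : IntegrableOn ρ (Ioc a v) μ) (hφρ : IntegrableOn (fun y => φ y * ρ y) (Ioc a v) μ) :
    ‖incrementIntegral μ a φ ρ v - incrementIntegral μ a φ ρ u‖
      ≤ (φ v - φ u) * K * μ.real (Ioc a v) := by
  have hφuv : 0 ≤ φ v - φ u :=
    sub_nonneg.2 (hφ (left_mem_Icc.2 huv) (right_mem_Icc.2 huv) huv)
  have hR : ‖∫ y in Ioc a u, ρ y ∂μ‖ ≤ K * μ.real (Ioc a u) :=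
    norm_setIntegral_le_of_norm_le_const measure_Ioc_lt_top
      fun y hy => hK y ⟨hy.1, hy.2.trans huv⟩
  have hE := norm_setIntegral_Ioc_le huv hφ (fun y hy => hK y ⟨hau.trans_lt hy.1, hy.2⟩)
    (measure_Ioc_lt_top (μ := μ))
  have hμ : μ.real (Ioc a v) = μ.real (Ioc a u) + μ.real (Ioc u v) := by
    rw [← Ioc_union_Ioc_eq_Ioc hau huv,
      measureReal_union (Ioc_disjoint_Ioc_of_le le_rfl) measurableSet_Ioc
        measure_Ioc_lt_top.ne measure_Ioc_lt_top.ne]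
  rw [sub_eq hau huv hρ hφρ, hμ]
  calc _ ≤ ‖(φ v - φ u) * ∫ y in Ioc a u, ρ y ∂μ‖ + ‖∫ y in Ioc u v, (φ v - φ y) * ρ y ∂μ‖ :=
        norm_add_le _ _
    _ ≤ (φ v - φ u) * (K * μ.real (Ioc a u)) + (φ v - φ u) * K * μ.real (Ioc u v) := by
        rw [norm_mul, Real.norm_of_nonneg hφuv]
        gcongr
    _ = _ := by ring

variable [IsLocallyFiniteMeasure μ]

lemma continuousOn (hmono : MonotoneOn φ (Ici a)) (hφ : ContinuousOn φ (Ici a))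
    (hρ : ContinuousOn ρ (Ici a)) : ContinuousOn (incrementIntegral μ a φ ρ) (Ici a) := by
  intro x hx
  set b := x + 1
  have hxb : x ∈ Icc a b := ⟨hx, by linarith⟩
  obtain ⟨K, hK⟩ := hρ.exists_norm_le_Icc_of_Ici b
  have hK0 : 0 ≤ K := (norm_nonneg _).trans (hK x hxb)
  set C := K * μ.real (Ioc a b)
  have hlip : ∀ u ∈ Icc a b, ∀ v ∈ Icc a b, u ≤ v →
      ‖incrementIntegral μ a φ ρ v - incrementIntegral μ a φ ρ u‖ ≤ C * ‖φ v - φ u‖ := by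
    intro u hu v hv huv
    have hφuv : 0 ≤ φ v - φ u := sub_nonneg.2 (hmono hu.1 (hu.1.trans huv) huv)
    calc _ ≤ (φ v - φ u) * K * μ.real (Ioc a v) :=
          norm_sub_le hu.1 huv (hmono.mono fun y hy => hu.1.trans hy.1)
            (fun y hy => hK y ⟨hy.1.le, hy.2.trans hv.2⟩)
            (hρ.integrableOn_Ioc_of_Ici v) ((hφ.mul hρ).integrableOn_Ioc_of_Ici v)
      _ ≤ (φ v - φ u) * K * μ.real (Ioc a b) := by
          gcongr
          · exact measure_Ioc_lt_top.ne
          · exact hv.2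
      _ = C * ‖φ v - φ u‖ := by rw [Real.norm_of_nonneg hφuv]; ring
  have hnear : ∀ t ∈ Icc a b,
      ‖incrementIntegral μ a φ ρ t - incrementIntegral μ a φ ρ x‖ ≤ C * ‖φ t - φ x‖ := by
    intro t ht
    rcases le_total t x with htx | hxt
    · rw [norm_sub_rev, norm_sub_rev (φ t)]
      exact hlip t ht x hxb htx
    · exact hlip x hxb t ht hxt
  have hIcc : Icc a b ∈ 𝓝[Ici a] x := by
    rw [← Ici_inter_Iic]
    exact inter_mem_nhdsWithin _ (Iic_mem_nhds (by linarith))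
  rw [ContinuousWithinAt, tendsto_iff_norm_sub_tendsto_zero]
  refine squeeze_zero' (.of_forall fun _ => norm_nonneg _) (mem_of_superset hIcc hnear) ?_
  simpa using ((hφ x hx).tendsto.sub_const (φ x)).norm.const_mul C

lemma hasDerivWithinAt {x φ' : ℝ} (hx : a ≤ x) (hmono : MonotoneOn φ (Ici a))
    (hφ : ContinuousOn φ (Ici a)) (hρ : ContinuousOn ρ (Ici a))
    (hφ' : HasDerivWithinAt φ φ' (Ici x) x) :
    HasDerivWithinAt (incrementIntegral μ a φ ρ) (φ' * ∫ y in Ioc a x, ρ y ∂μ) (Ici x) x := by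
  set R := ∫ y in Ioc a x, ρ y ∂μ
  set E : ℝ → ℝ := fun t => ∫ y in Ioc x t, (φ t - φ y) * ρ y ∂μ
  obtain ⟨K, hK⟩ := hρ.exists_norm_le_Icc_of_Ici (x + 1)
  rw [hasDerivWithinAt_iff_tendsto_slope, Ici_sdiff_left] at hφ' ⊢
  have hnear : Ioo x (x + 1) ∈ 𝓝[>] x := Ioo_mem_nhdsGT (by linarith)
  have hslope : (fun t => slope φ x t * R + E t / (t - x))
      =ᶠ[𝓝[>] x] slope (incrementIntegral μ a φ ρ) x := by
    filter_upwards [hnear] with t ht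
    rw [slope_def_field, slope_def_field, sub_eq hx ht.1.le (hρ.integrableOn_Ioc_of_Ici t)
      ((hφ.mul hρ).integrableOn_Ioc_of_Ici t), add_div, div_mul_eq_mul_div]
  have hE : Tendsto (fun t => E t / (t - x)) (𝓝[>] x) (𝓝 0) := by
    refine squeeze_zero_norm' ?_
      (by simpa using (hφ'.mul_const K).mul (tendsto_measureReal_Ioc_nhdsGT μ x))
    filter_upwards [hnear] with t ht
    have htx : 0 < t - x := sub_pos.2 ht.1
    rw [norm_div, Real.norm_of_nonneg htx.le, div_le_iff₀ htx]
    calc ‖E t‖ ≤ (φ t - φ x) * K * μ.real (Ioc x t) :=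
          norm_setIntegral_Ioc_le ht.1.le (hmono.mono fun y hy => hx.trans hy.1)
            (fun y hy => hK y ⟨hx.trans hy.1.le, hy.2.trans ht.2.le⟩)
            (measure_Ioc_lt_top (μ := μ))
      _ = slope φ x t * K * μ.real (Ioc x t) * (t - x) := by
          rw [slope_def_field]
          field_simp
  simpa using ((hφ'.mul_const R).add hE).congr' hslope

end incrementIntegral

lemma hasDerivWithinAt_integral_Ici {a x : ℝ} {h : ℝ → ℝ} (hh : ContinuousOn h (Ici a))
    (hx : a ≤ x) : HasDerivWithinAt (fun t => ∫ z in a..t, h z) (h x) (Ici a) x := by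
  have hint : IntervalIntegrable h volume a x :=
    (hh.mono Icc_subset_Ici_self).intervalIntegrable_of_Icc hx
  rcases hx.eq_or_lt with rfl | hax
  · exact intervalIntegral.integral_hasDerivWithinAt_right hint (t := Ioi a)
      ((hh.mono Ioi_subset_Ici_self).stronglyMeasurableAtFilter_nhdsWithin measurableSet_Ioi a)
      ((hh a self_mem_Ici).mono Ioi_subset_Ici_self)
  · exact (intervalIntegral.integral_hasDerivAt_right hint
      ((hh.mono Ioi_subset_Ici_self).stronglyMeasurableAtFilter isOpen_Ioi x hax)
      (hh.continuousAt (Ici_mem_nhds hax))).hasDerivWithinAt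

noncomputable def scaleFunction (a : ℝ) (g : ℝ → ℝ) (t : ℝ) : ℝ :=
  ∫ z in a..t, ((g z) ^ 2)⁻¹

namespace scaleFunction

variable {a : ℝ} {g : ℝ → ℝ}

@[simp]
lemma self : scaleFunction a g a = 0 :=
  intervalIntegral.integral_same

lemma hasDerivWithinAt (hg : ContinuousOn g (Ici a)) (hpos : ∀ x ∈ Ici a, 0 < g x) {x : ℝ}
    (hx : a ≤ x) : HasDerivWithinAt (scaleFunction a g) ((g x ^ 2)⁻¹) (Ici a) x :=
  hasDerivWithinAt_integral_Ici ((hg.pow 2).inv₀ fun z hz => pow_ne_zero 2 (hpos z hz).ne') hx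

lemma continuousOn (hg : ContinuousOn g (Ici a)) (hpos : ∀ x ∈ Ici a, 0 < g x) :
    ContinuousOn (scaleFunction a g) (Ici a) :=
  fun _ hx => (hasDerivWithinAt hg hpos hx).continuousWithinAt

lemma monotoneOn (hg : ContinuousOn g (Ici a)) (hpos : ∀ x ∈ Ici a, 0 < g x) :
    MonotoneOn (scaleFunction a g) (Ici a) :=
  monotoneOn_of_hasDerivWithinAt_nonneg (convex_Ici a) (continuousOn hg hpos)
    (fun _ hx => (hasDerivWithinAt hg hpos (interior_subset hx)).mono interior_subset)
    (fun _ _ => inv_nonneg.2 (sq_nonneg _))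

end scaleFunction

section RightDerivative

variable {μ : Measure ℝ} [IsLocallyFiniteMeasure μ] {a κ : ℝ} {g : ℝ → ℝ}

lemma inv_add_mul_scaleFunction_add_incrementIntegral (hg : ContinuousOn g (Ici a))
    (hpos : ∀ x ∈ Ici a, 0 < g x)
    (hder : ∀ x, a ≤ x → HasDerivWithinAt g (κ + ∫ y in Ioc a x, g y ∂μ) (Ici x) x)
    {x : ℝ} (hx : a ≤ x) :
    (g x)⁻¹ + κ * scaleFunction a g x + incrementIntegral μ a (scaleFunction a g) g x
      = (g a)⁻¹ := by
  set s := scaleFunction a g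
  have hcont : ContinuousOn (fun t => (g t)⁻¹ + κ * s t + incrementIntegral μ a s g t) (Ici a) :=
    ((hg.inv₀ fun t ht => (hpos t ht).ne').add
      (continuousOn_const.mul (scaleFunction.continuousOn hg hpos))).add
      (incrementIntegral.continuousOn (scaleFunction.monotoneOn hg hpos)
        (scaleFunction.continuousOn hg hpos) hg)
  have hderiv : ∀ t ∈ Ico a x, HasDerivWithinAt
      (fun t => (g t)⁻¹ + κ * s t + incrementIntegral μ a s g t) 0 (Ici t) t := by
    rintro t ⟨hat, -⟩
    have hs : HasDerivWithinAt s ((g t ^ 2)⁻¹) (Ici t) t :=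
      (scaleFunction.hasDerivWithinAt hg hpos hat).mono (Ici_subset_Ici.2 hat)
    refine ((((hder t hat).inv (hpos t hat).ne').add (hs.const_mul κ)).add
      (incrementIntegral.hasDerivWithinAt (μ := μ) hat (scaleFunction.monotoneOn hg hpos)
        (scaleFunction.continuousOn hg hpos) hg hs)).congr_deriv ?_
    have := (hpos t hat).ne'
    field_simp
    ring
  simpa [s] using constant_of_has_deriv_right_zero (hcont.mono Icc_subset_Ici_self) hderiv x
    ⟨hx, le_rfl⟩

lemma hasDerivWithinAt_scaleFunction_mul (hg : ContinuousOn g (Ici a))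
    (hpos : ∀ x ∈ Ici a, 0 < g x)
    (hder : ∀ x, a ≤ x → HasDerivWithinAt g (κ + ∫ y in Ioc a x, g y ∂μ) (Ici x) x)
    {x : ℝ} (hx : a ≤ x) :
    HasDerivWithinAt (fun t => scaleFunction a g t * g t)
      (1 / g a + ∫ y in Ioc a x, scaleFunction a g y * g y ∂μ) (Ici x) x := by
  have hs := (scaleFunction.hasDerivWithinAt hg hpos hx).mono (Ici_subset_Ici.2 hx)
  have hid := inv_add_mul_scaleFunction_add_incrementIntegral hg hpos hder hx
  rw [incrementIntegral.eq_sub (hg.integrableOn_Ioc_of_Ici x)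
    (((scaleFunction.continuousOn hg hpos).mul hg).integrableOn_Ioc_of_Ici x)] at hid
  refine (hs.mul (hder x hx)).congr_deriv ?_
  rw [one_div, sq, mul_inv, inv_mul_cancel_right₀ (hpos x hx).ne']
  linear_combination hid

lemma scaleFunction_mul_eq (hg : ContinuousOn g (Ici a)) (hpos : ∀ x ∈ Ici a, 0 < g x)
    (hder : ∀ x, a ≤ x → HasDerivWithinAt g (κ + ∫ y in Ioc a x, g y ∂μ) (Ici x) x)
    {x : ℝ} (hx : a ≤ x) :
    scaleFunction a g x * g x
      = (x - a) / g a + incrementIntegral μ a id (fun y => scaleFunction a g y * g y) x := by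
  have hsg : ContinuousOn (fun y => scaleFunction a g y * g y) (Ici a) :=
    (scaleFunction.continuousOn hg hpos).mul hg
  have hrhs : ContinuousOn
      (fun t => (t - a) / g a + incrementIntegral μ a id (fun y => scaleFunction a g y * g y) t)
      (Ici a) :=
    ((continuousOn_id.sub continuousOn_const).div_const _).add
      (incrementIntegral.continuousOn monotoneOn_id continuousOn_id hsg)
  refine eq_of_has_deriv_right_eq
    (fun t ht => hasDerivWithinAt_scaleFunction_mul hg hpos hder ht.1) (fun t ht => ?_)
    (hsg.mono Icc_subset_Ici_self) (hrhs.mono Icc_subset_Ici_self) (by simp) x ⟨hx, le_rfl⟩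
  have hlin : HasDerivWithinAt (fun u => (u - a) / g a) (1 / g a) (Ici t) t :=
    ((hasDerivWithinAt_id t _).sub_const a).div_const (g a)
  exact (hlin.add (incrementIntegral.hasDerivWithinAt ht.1 monotoneOn_id continuousOn_id hsg
    (hasDerivWithinAt_id t _))).congr_deriv (by rw [one_mul])

end RightDerivative

theorem stmt19_general (μ : Measure ℝ) [IsLocallyFiniteMeasure μ] (a κ : ℝ)
    (g : ℝ → ℝ) (hconv : ConvexOn ℝ (Ici a) g)
    (hpos : ∀ x ∈ Ici a, 0 < g x)
    (hder : ∀ x : ℝ, a ≤ x →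
      HasDerivWithinAt g (κ + ∫ y in Ioc a x, g y ∂μ) (Ici x) x) :
    (∀ x : ℝ, a ≤ x →
      HasDerivWithinAt (fun t => (∫ z in a..t, ((g z) ^ 2)⁻¹) * g t)
        (1 / g a + ∫ y in Ioc a x, (∫ z in a..y, ((g z) ^ 2)⁻¹) * g y ∂μ)
        (Ici x) x) ∧
    (∀ x : ℝ, a ≤ x →
      (∫ z in a..x, ((g z) ^ 2)⁻¹) * g x =
        (x - a) / g a
          + ∫ y in Ioc a x, (x - y) * (∫ z in a..y, ((g z) ^ 2)⁻¹) * g y ∂μ) := by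
  have hg : ContinuousOn g (Ici a) := hconv.continuousOn_Ici (hder a le_rfl).continuousWithinAt
  refine ⟨fun x hx => hasDerivWithinAt_scaleFunction_mul hg hpos hder hx, fun x hx => ?_⟩
  simpa only [incrementIntegral, scaleFunction, id, mul_assoc] using
    scaleFunction_mul_eq hg hpos hder hx

/-- if g'₊ is the cumulative of g dμ, then s_g·g satisfies the
corresponding derivative and integral identities. -/
theorem stmt19 (μ : Measure ℝ) [IsLocallyFiniteMeasure μ] (a κ : ℝ)
    (g : ℝ → ℝ) (hconv : ConvexOn ℝ (Ici a) g)
    (hpos : ∀ x ∈ Ici a, 0 < g x)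
    (hdera : HasDerivWithinAt g κ (Ici a) a)
    (hder : ∀ x : ℝ, a ≤ x →
      HasDerivWithinAt g (κ + ∫ y in Ioc a x, g y ∂μ) (Ici x) x) :
    (∀ x : ℝ, a ≤ x →
      HasDerivWithinAt (fun t => (∫ z in a..t, ((g z) ^ 2)⁻¹) * g t)
        (1 / g a + ∫ y in Ioc a x, (∫ z in a..y, ((g z) ^ 2)⁻¹) * g y ∂μ)
        (Ici x) x) ∧
    (∀ x : ℝ, a ≤ x →
      (∫ z in a..x, ((g z) ^ 2)⁻¹) * g x =
        (x - a) / g a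
          + ∫ y in Ioc a x, (x - y) * (∫ z in a..y, ((g z) ^ 2)⁻¹) * g y ∂μ) :=
  stmt19_general μ a κ g hconv hpos hder
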